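/- Assume (r1,r2,r3,r4,i,j,N) is admissible with i + j ≥ r1 + r3 and i + j ≥ r2 + r4 (so m_min = 0), and let c ≥ 0 be an integer. Then Σ_{m=0}^{m_max} (−1)^{ρ−m} [ρ+N−1−m]! · ( [c+m]! / [c+N−2+m]! ) / ( [m]! · [(r3+r4−i)/2 − m]! · [(r1+r2−i)/2 − m]! · [(r2+r3−j)/2 − m]! · [(r1+r4−j)/2 − m]! · [(i+j−r2−r4)/2 + m]! · [(i+j−r1−r3)/2 + m]! ) = (−1)^ρ · ( [ρ+N−1]! · [c]! / [c+N−2]! ) / ( [(r3+r4−i)/2]! · [(r1+r2−i)/2]! · [(r2+r3−j)/2]! · [(r1+r4−j)/2]! · [(i+j−r2−r4)/2]! · [(i+j−r1−r3)/2]! ) · Σ_{n=0}^{m_max} qⁿ · (q^{c+1};q)_n (q^{a1};q)_n (q^{a2};q)_n (q^{a3};q)_n (q^{a4};q)_n / ( (q;q)_n (q^{c+N−1};q)_n (q^{b1};q)_n (q^{b2};q)_n (q^{b3};q)_n ), where a1 = (i−r1−r2)/2, a2 = (i−r3−r4)/2, a3 = (j−r1−r4)/2, a4 = (j−r2−r3)/2,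 b1 = −ρ−(N−1), b2 = (i+j−r2−r4)/2 + 1, b3 = (i+j−r1−r3)/2 + 1. This is the terminating ₅Φ₄ representation (Statement 2 of the paper, type I form) of the original multiplicity-free 6-j sum, where c plays the role of k − m_max. -/

import Mathlib

open Finset

/-- The quantum integer `[n] = (tⁿ − t⁻ⁿ)/(t − t⁻¹)`. -/
noncomputable def qint (t : ℝ) (n : ℤ) : ℝ := (t ^ n - t ^ (-n)) / (t - t⁻¹)

/-- The quantum factorial `[n]! = [1][2]⋯[n]`, with `[0]! = 1`
(and value `1` for negative arguments, which never occur below). -/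
noncomputable def qfact (t : ℝ) (n : ℤ) : ℝ :=
  ∏ k ∈ Finset.range n.toNat, qint t ((k : ℤ) + 1)

/-- The q-Pochhammer symbol `(x; q)_n = ∏_{s=0}^{n−1} (1 − x qˢ)`. -/
noncomputable def qpoch (x q : ℝ) (n : ℕ) : ℝ :=
  ∏ s ∈ Finset.range n, (1 - x * q ^ s)

/-- Admissibility of the tuple `(r₁,r₂,r₃,r₄,i,j,N)`. -/
def Admissible (r₁ r₂ r₃ r₄ i j N : ℤ) : Prop :=
  0 ≤ r₁ ∧ 0 ≤ r₂ ∧ 0 ≤ r₃ ∧ 0 ≤ r₄ ∧ 0 ≤ i ∧ 0 ≤ j ∧ 2 ≤ N ∧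
  2 ∣ (r₁ + r₂ + i) ∧ 2 ∣ (r₃ + r₄ + i) ∧ 2 ∣ (r₁ + r₄ + j) ∧ 2 ∣ (r₂ + r₃ + j) ∧
  max |r₁ - r₂| |r₃ - r₄| ≤ i ∧ i ≤ min (r₁ + r₂) (r₃ + r₄) ∧
  max |r₂ - r₃| |r₁ - r₄| ≤ j ∧ j ≤ min (r₂ + r₃) (r₁ + r₄)

/-- `ρ = (r₁+r₂+r₃+r₄)/2`. -/
def rho (r₁ r₂ r₃ r₄ : ℤ) : ℤ := (r₁ + r₂ + r₃ + r₄) / 2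

/-- `m_max = (1/2)·min(r₁+r₂−i, r₃+r₄−i, r₁+r₄−j, r₂+r₃−j)`. -/
def mMax (r₁ r₂ r₃ r₄ i j : ℤ) : ℤ :=
  (min (min (r₁ + r₂ - i) (r₃ + r₄ - i)) (min (r₁ + r₄ - j) (r₂ + r₃ - j))) / 2

/-- `m_min = (1/2)·max(0, r₁+r₃−i−j, r₂+r₄−i−j)`. -/
def mMin (r₁ r₂ r₃ r₄ i j : ℤ) : ℤ :=
  (max 0 (max (r₁ + r₃ - i - j) (r₂ + r₄ - i - j))) / 2

/-- `θ_N(a,b,c)`. -/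
noncomputable def theta (t : ℝ) (N a b c : ℤ) : ℝ :=
  Real.sqrt (qfact t ((a + b - c) / 2) * qfact t ((a - b + c) / 2) *
    qfact t ((-a + b + c) / 2) / qfact t ((a + b + c) / 2 + N - 1))

/-- `K′ = θ_N(r₁,r₂,i)·θ_N(r₃,r₄,i)·θ_N(r₁,r₄,j)·θ_N(r₂,r₃,j)·[N−1]!·[N−2]!`. -/
noncomputable def Kprime (t : ℝ) (N r₁ r₂ r₃ r₄ i j : ℤ) : ℝ :=
  theta t N r₁ r₂ i * theta t N r₃ r₄ i * theta t N r₁ r₄ j * theta t N r₂ r₃ j *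
    qfact t (N - 1) * qfact t (N - 2)

/-- The multiplicity-free 6-j expression `F_T^N(r₁,r₂,i; r₃,r₄,j)` of type `T ∈ {1,2}`. -/
noncomputable def F (t : ℝ) (T : ℕ) (N r₁ r₂ i r₃ r₄ j : ℤ) : ℝ :=
  Kprime t N r₁ r₂ r₃ r₄ i j *
    ∑ m ∈ Finset.Icc (mMin r₁ r₂ r₃ r₄ i j) (mMax r₁ r₂ r₃ r₄ i j),
      (-1 : ℝ) ^ (rho r₁ r₂ r₃ r₄ - m) * qfact t (rho r₁ r₂ r₃ r₄ + N - 1 - m) /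
        (qfact t m * qfact t ((r₃ + r₄ - i) / 2 - m) * qfact t ((r₂ + r₃ - j) / 2 - m) *
          qfact t ((r₁ + r₄ - j) / 2 - m) * qfact t ((i + j - r₂ - r₄) / 2 + m) *
          qfact t ((r₁ + r₂ - i) / 2 + (N - 2) * (if T = 2 then 1 else 0) - m) *
          qfact t ((i + j - r₁ - r₃) / 2 + (N - 2) * (if T = 1 then 1 else 0) + m))

/-- The prefactor `K_T` (for the case `m_min = 0`). -/
noncomputable def Kfac (t : ℝ) (T : ℕ) (N r₁ r₂ i r₃ r₄ j : ℤ) : ℝ :=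
  Kprime t N r₁ r₂ r₃ r₄ i j * qfact t (rho r₁ r₂ r₃ r₄ + N - 1) /
    (qfact t ((r₃ + r₄ - i) / 2) *
      qfact t ((r₁ + r₂ - i) / 2 + (N - 2) * (if T = 2 then 1 else 0)) *
      qfact t ((r₂ + r₃ - j) / 2) * qfact t ((r₁ + r₄ - j) / 2) *
      qfact t ((i + j - r₂ - r₄) / 2) *
      qfact t ((i + j - r₁ - r₃) / 2 + (N - 2) * (if T = 1 then 1 else 0)))

/-! The two sides agree term by term. Write `A, B, C, D` for `(r₃+r₄−i)/2`,
`(r₁+r₂−i)/2`, `(r₂+r₃−j)/2`, `(r₁+r₄−j)/2` and `E, F` for `(i+j−r₂−r₄)/2`,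
`(i+j−r₁−r₃)/2`, so that `ρ = A + B + C + D + E + F`. The ratio of consecutive summands on
the left is `−[c+m+1][A−m][B−m][C−m][D−m] / ([ρ+N−1−m][c+N−1+m][m+1][E+m+1][F+m+1])`, and
`1 − qᵏ = −tᵏ (t − t⁻¹) [k]` turns it into the ratio of consecutive terms of the `₅Φ₄`
series: the factors `t − t⁻¹` cancel and the powers of `t` collect to `t² = q` because of
the relation for `ρ`. Hence the `m`-th summand is the `0`-th one times the `m`-th term of
the series. -/

section QuantumIntegers

variable {t : ℝ}

lemma qint_neg (t : ℝ) (k : ℤ) : qint t (-k) = -qint t k := by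
  simp only [qint, neg_neg]
  ring

lemma inv_lt_self_or_self_lt_inv (ht : 0 < t) (ht1 : t ≠ 1) :
    (t < 1 ∧ t < t⁻¹) ∨ (1 < t ∧ t⁻¹ < t) := by
  rcases ht1.lt_or_gt with h | h
  · exact .inl ⟨h, h.trans ((one_lt_inv₀ ht).mpr h)⟩
  · exact .inr ⟨h, (inv_lt_one_of_one_lt₀ h).trans h⟩

lemma sub_inv_ne_zero_of_pos (ht : 0 < t) (ht1 : t ≠ 1) : t - t⁻¹ ≠ 0 := by
  rcases inv_lt_self_or_self_lt_inv ht ht1 with ⟨-, h⟩ | ⟨-, h⟩ <;> linarith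

lemma qint_pos (ht : 0 < t) (ht1 : t ≠ 1) {k : ℤ} (hk : 0 < k) : 0 < qint t k := by
  rcases inv_lt_self_or_self_lt_inv ht ht1 with ⟨h, hinv⟩ | ⟨h, hinv⟩
  · exact div_pos_of_neg_of_neg
      (sub_neg.mpr (zpow_lt_zpow_right_of_lt_one₀ ht h (by omega))) (sub_neg.mpr hinv)
  · exact div_pos (sub_pos.mpr (zpow_lt_zpow_right₀ h (by omega))) (sub_pos.mpr hinv)

lemma one_sub_sq_zpow_mul_pow (h : t - t⁻¹ ≠ 0) {a k : ℤ} {n : ℕ} (hk : a + n = k) :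
    1 - (t ^ 2) ^ a * (t ^ 2) ^ n = -(t ^ k * (t - t⁻¹) * qint t k) := by
  have ht : t ≠ 0 := by rintro rfl; simp at h
  subst hk
  rw [qint, mul_assoc, mul_div_cancel₀ _ h, ← zpow_natCast (t ^ 2) n,
    ← zpow_add₀ (pow_ne_zero 2 ht), sq, mul_zpow, zpow_neg, mul_sub,
    mul_inv_cancel₀ (zpow_ne_zero _ ht)]
  ring

lemma qfact_pos (ht : 0 < t) (ht1 : t ≠ 1) (n : ℤ) : 0 < qfact t n :=
  prod_pos fun _ _ => qint_pos ht ht1 (by omega)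

lemma qfact_succ {n : ℤ} (hn : 0 ≤ n) : qfact t (n + 1) = qfact t n * qint t (n + 1) := by
  rw [qfact, show (n + 1).toNat = n.toNat + 1 by omega, prod_range_succ, Int.toNat_of_nonneg hn]
  rfl

end QuantumIntegers

lemma qpoch_succ (x q : ℝ) (n : ℕ) : qpoch x q (n + 1) = qpoch x q n * (1 - x * q ^ n) :=
  prod_range_succ _ n

lemma qpoch_zero (x q : ℝ) : qpoch x q 0 = 1 := prod_range_zero _

lemma eq_of_succ_eq_mul {α : Type*} [Mul α] {u v r : ℕ → α} {M : ℕ} (h0 : u 0 = v 0)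
    (hu : ∀ n < M, u (n + 1) = u n * r n) (hv : ∀ n < M, v (n + 1) = v n * r n) :
    ∀ n ≤ M, u n = v n
  | 0, _ => h0
  | n + 1, hn => by
    rw [hu n hn, hv n hn, eq_of_succ_eq_mul h0 hu hv n (by omega)]

lemma sum_Icc_zero_eq_sum_range {β : Type*} [AddCommMonoid β] (f : ℤ → β) {M : ℤ}
    (hM : 0 ≤ M) : ∑ m ∈ Icc 0 M, f m = ∑ n ∈ range (M.toNat + 1), f n := by
  rw [Int.Icc_eq_finset_map, sum_map, show M + 1 - 0 = ((M.toNat + 1 : ℕ) : ℤ) by omega,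
    Int.toNat_natCast]
  simp

section Summands

variable (t : ℝ) (ρ N c A B C D E F : ℤ)

noncomputable def sixjSummand (m : ℤ) : ℝ :=
  (-1 : ℝ) ^ (ρ - m) * qfact t (ρ + N - 1 - m) * (qfact t (c + m) / qfact t (c + N - 2 + m)) /
    (qfact t m * qfact t (A - m) * qfact t (B - m) * qfact t (C - m) * qfact t (D - m) *
      qfact t (E + m) * qfact t (F + m))

noncomputable def phiSummand (n : ℕ) : ℝ :=
  (t ^ 2) ^ n *
    (qpoch ((t ^ 2) ^ (c + 1)) (t ^ 2) n * qpoch ((t ^ 2) ^ (-B)) (t ^ 2) n *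
      qpoch ((t ^ 2) ^ (-A)) (t ^ 2) n * qpoch ((t ^ 2) ^ (-D)) (t ^ 2) n *
      qpoch ((t ^ 2) ^ (-C)) (t ^ 2) n) /
    (qpoch (t ^ 2) (t ^ 2) n * qpoch ((t ^ 2) ^ (c + N - 1)) (t ^ 2) n *
      qpoch ((t ^ 2) ^ (-ρ - (N - 1))) (t ^ 2) n * qpoch ((t ^ 2) ^ (E + 1)) (t ^ 2) n *
      qpoch ((t ^ 2) ^ (F + 1)) (t ^ 2) n)

noncomputable def summandRatio (m : ℤ) : ℝ :=
  -(qint t (c + m + 1) * qint t (A - m) * qint t (B - m) * qint t (C - m) * qint t (D - m)) /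
    (qint t (ρ + N - 1 - m) * qint t (c + N - 1 + m) * qint t (m + 1) * qint t (E + m + 1) *
      qint t (F + m + 1))

variable {t ρ N c A B C D E F}

lemma sixjSummand_succ (ht : 0 < t) (ht1 : t ≠ 1) (hc : 0 ≤ c) (hN : 2 ≤ N) (hE : 0 ≤ E)
    (hF : 0 ≤ F) {m : ℤ} (hm : 0 ≤ m) (hA : m < A) (hB : m < B) (hC : m < C) (hD : m < D)
    (hρ : m + 1 ≤ ρ + N - 1) :
    sixjSummand t ρ N c A B C D E F (m + 1) =
      sixjSummand t ρ N c A B C D E F m * summandRatio t ρ N c A B C D E F m := by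
  have shift {k l : ℤ} (hkl : l = k + 1) (hk : 0 ≤ k) : qfact t l = qfact t k * qint t l :=
    hkl ▸ qfact_succ hk
  have hqint {k : ℤ} (hk : 0 < k) : qint t k ≠ 0 := (qint_pos ht ht1 hk).ne'
  have hqfact (k : ℤ) : qfact t k ≠ 0 := (qfact_pos ht ht1 k).ne'
  have := hqint (k := ρ + N - 1 - m) (by omega)
  have := hqint (k := c + N - 1 + m) (by omega)
  have := hqint (k := m + 1) (by omega)
  have := hqint (k := E + m + 1) (by omega)
  have := hqint (k := F + m + 1) (by omega)
  have := hqint (k := A - m) (by omega)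
  have := hqint (k := B - m) (by omega)
  have := hqint (k := C - m) (by omega)
  have := hqint (k := D - m) (by omega)
  simp only [sixjSummand, summandRatio]
  rw [shift (k := ρ + N - 1 - (m + 1)) (l := ρ + N - 1 - m) (by ring) (by omega),
    shift (k := A - (m + 1)) (l := A - m) (by ring) (by omega),
    shift (k := B - (m + 1)) (l := B - m) (by ring) (by omega),
    shift (k := C - (m + 1)) (l := C - m) (by ring) (by omega),
    shift (k := D - (m + 1)) (l := D - m) (by ring) (by omega),
    shift (k := c + m) (l := c + (m + 1)) (by ring) (by omega),
    shift (k := c + N - 2 + m) (l := c + N - 2 + (m + 1)) (by ring) (by omega),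
    shift (k := m) (l := m + 1) rfl hm,
    shift (k := E + m) (l := E + (m + 1)) (by ring) (by omega),
    shift (k := F + m) (l := F + (m + 1)) (by ring) (by omega),
    show ρ - m = ρ - (m + 1) + 1 by ring, zpow_add_one₀ (by norm_num : (-1 : ℝ) ≠ 0),
    show c + (m + 1) = c + m + 1 by ring, show c + N - 2 + (m + 1) = c + N - 1 + m by ring,
    show E + (m + 1) = E + m + 1 by ring, show F + (m + 1) = F + m + 1 by ring]
  field_simp [hqfact]

lemma summandRatio_natCast (h : t - t⁻¹ ≠ 0) (hρ : ρ = A + B + C + D + E + F) (n : ℕ) :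
    summandRatio t ρ N c A B C D E F n =
      t ^ 2 * ((1 - (t ^ 2) ^ (c + 1) * (t ^ 2) ^ n) * (1 - (t ^ 2) ^ (-B) * (t ^ 2) ^ n) *
        (1 - (t ^ 2) ^ (-A) * (t ^ 2) ^ n) * (1 - (t ^ 2) ^ (-D) * (t ^ 2) ^ n) *
        (1 - (t ^ 2) ^ (-C) * (t ^ 2) ^ n)) /
      ((1 - t ^ 2 * (t ^ 2) ^ n) * (1 - (t ^ 2) ^ (c + N - 1) * (t ^ 2) ^ n) *
        (1 - (t ^ 2) ^ (-ρ - (N - 1)) * (t ^ 2) ^ n) * (1 - (t ^ 2) ^ (E + 1) * (t ^ 2) ^ n) *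
        (1 - (t ^ 2) ^ (F + 1) * (t ^ 2) ^ n)) := by
  have ht : t ≠ 0 := by rintro rfl; simp at h
  have hpow : t ^ 2 = (t ^ (n + 1 : ℤ) * t ^ (c + N - 1 + n) * t ^ (-(ρ + N - 1 - n)) *
      t ^ (E + n + 1) * t ^ (F + n + 1)) /
      (t ^ (c + n + 1 : ℤ) * t ^ (-(B - n)) * t ^ (-(A - n)) * t ^ (-(D - n)) *
        t ^ (-(C - n))) := by
    rw [eq_div_iff (by positivity), ← zpow_natCast t 2]
    simp only [← zpow_add₀ ht]
    congr 1
    push_cast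
    omega
  have hbase : 1 - t ^ 2 * (t ^ 2) ^ n = -(t ^ (n + 1 : ℤ) * (t - t⁻¹) * qint t (n + 1)) := by
    simpa using one_sub_sq_zpow_mul_pow h (a := 1) (n := n) (k := n + 1) (by ring)
  rw [hbase, one_sub_sq_zpow_mul_pow h (k := c + n + 1) (by ring),
    one_sub_sq_zpow_mul_pow h (a := -A) (k := -(A - n)) (by ring),
    one_sub_sq_zpow_mul_pow h (a := -B) (k := -(B - n)) (by ring),
    one_sub_sq_zpow_mul_pow h (a := -C) (k := -(C - n)) (by ring),
    one_sub_sq_zpow_mul_pow h (a := -D) (k := -(D - n)) (by ring),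
    one_sub_sq_zpow_mul_pow h (k := c + N - 1 + n) (by ring),
    one_sub_sq_zpow_mul_pow h (k := -(ρ + N - 1 - n)) (by ring),
    one_sub_sq_zpow_mul_pow h (k := E + n + 1) (by ring),
    one_sub_sq_zpow_mul_pow h (k := F + n + 1) (by ring), hpow]
  simp only [summandRatio, qint_neg]
  generalize t - t⁻¹ = δ at h
  field_simp

lemma phiSummand_succ (h : t - t⁻¹ ≠ 0) (hρ : ρ = A + B + C + D + E + F) (n : ℕ) :
    phiSummand t ρ N c A B C D E F (n + 1) =
      phiSummand t ρ N c A B C D E F n * summandRatio t ρ N c A B C D E F n := by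
  rw [summandRatio_natCast h hρ]
  simp only [phiSummand, qpoch_succ, div_eq_mul_inv, mul_inv]
  ring


lemma sixjSummand_eq_mul_phiSummand (ht : 0 < t) (ht1 : t ≠ 1) (hc : 0 ≤ c) (hN : 2 ≤ N)
    (hE : 0 ≤ E) (hF : 0 ≤ F) (hρ : ρ = A + B + C + D + E + F) {M : ℤ} (hA : M ≤ A)
    (hB : M ≤ B) (hC : M ≤ C) (hD : M ≤ D) {n : ℕ} (hn : (n : ℤ) ≤ M) :
    sixjSummand t ρ N c A B C D E F n =
      sixjSummand t ρ N c A B C D E F 0 * phiSummand t ρ N c A B C D E F n := by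
  refine eq_of_succ_eq_mul (u := fun n : ℕ => sixjSummand t ρ N c A B C D E F n)
    (v := fun n => sixjSummand t ρ N c A B C D E F 0 * phiSummand t ρ N c A B C D E F n)
    (r := fun n => summandRatio t ρ N c A B C D E F n) (M := M.toNat)
    ?_ (fun k hk => ?_) (fun k hk => ?_) n (by omega)
  · simp [phiSummand, qpoch_zero]
  · push_cast
    exact sixjSummand_succ ht ht1 hc hN hE hF (by omega) (by omega) (by omega) (by omega)
      (by omega) (by omega)
  · rw [mul_assoc, phiSummand_succ (sub_inv_ne_zero_of_pos ht ht1) hρ]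

theorem sum_sixjSummand_eq (ht : 0 < t) (ht1 : t ≠ 1) (hc : 0 ≤ c) (hN : 2 ≤ N)
    (hE : 0 ≤ E) (hF : 0 ≤ F) (hρ : ρ = A + B + C + D + E + F) {M : ℤ} (hM : 0 ≤ M)
    (hA : M ≤ A) (hB : M ≤ B) (hC : M ≤ C) (hD : M ≤ D) :
    ∑ m ∈ Icc 0 M, sixjSummand t ρ N c A B C D E F m =
      (-1 : ℝ) ^ ρ * (qfact t (ρ + N - 1) * qfact t c / qfact t (c + N - 2)) /
        (qfact t A * qfact t B * qfact t C * qfact t D * qfact t E * qfact t F) *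
        ∑ n ∈ range (M.toNat + 1), phiSummand t ρ N c A B C D E F n := by
  have hzero : sixjSummand t ρ N c A B C D E F 0 =
      (-1 : ℝ) ^ ρ * (qfact t (ρ + N - 1) * qfact t c / qfact t (c + N - 2)) /
        (qfact t A * qfact t B * qfact t C * qfact t D * qfact t E * qfact t F) := by
    simp only [sixjSummand, sub_zero, add_zero, qfact, Int.toNat_zero, prod_range_zero]
    ring
  rw [sum_Icc_zero_eq_sum_range _ hM, ← hzero, mul_sum]
  exact sum_congr rfl fun n hn =>
    sixjSummand_eq_mul_phiSummand ht ht1 hc hN hE hF hρ hA hB hC hD (by simp at hn; omega)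

end Summands

/-- the terminating `₅Φ₄` representation (type I form) of the original
multiplicity-free 6-j sum, with `c ≥ 0` playing the role of `k − m_max`. -/
theorem stmt18 (t : ℝ) (ht : 0 < t) (ht1 : t ≠ 1) (r₁ r₂ r₃ r₄ i j N c : ℤ)
    (hadm : Admissible r₁ r₂ r₃ r₄ i j N)
    (hij1 : r₁ + r₃ ≤ i + j) (hij2 : r₂ + r₄ ≤ i + j) (hc : 0 ≤ c) :
    (∑ m ∈ Finset.Icc (0 : ℤ) (mMax r₁ r₂ r₃ r₄ i j),
        (-1 : ℝ) ^ (rho r₁ r₂ r₃ r₄ - m) * qfact t (rho r₁ r₂ r₃ r₄ + N - 1 - m) *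
          (qfact t (c + m) / qfact t (c + N - 2 + m)) /
          (qfact t m * qfact t ((r₃ + r₄ - i) / 2 - m) * qfact t ((r₁ + r₂ - i) / 2 - m) *
            qfact t ((r₂ + r₃ - j) / 2 - m) * qfact t ((r₁ + r₄ - j) / 2 - m) *
            qfact t ((i + j - r₂ - r₄) / 2 + m) * qfact t ((i + j - r₁ - r₃) / 2 + m)))
      =
      (-1 : ℝ) ^ (rho r₁ r₂ r₃ r₄) *
        (qfact t (rho r₁ r₂ r₃ r₄ + N - 1) * qfact t c / qfact t (c + N - 2)) /
        (qfact t ((r₃ + r₄ - i) / 2) * qfact t ((r₁ + r₂ - i) / 2) *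
          qfact t ((r₂ + r₃ - j) / 2) * qfact t ((r₁ + r₄ - j) / 2) *
          qfact t ((i + j - r₂ - r₄) / 2) * qfact t ((i + j - r₁ - r₃) / 2)) *
        ∑ n ∈ Finset.range ((mMax r₁ r₂ r₃ r₄ i j).toNat + 1),
          (t ^ 2) ^ n *
            (qpoch ((t ^ 2) ^ (c + 1)) (t ^ 2) n *
              qpoch ((t ^ 2) ^ ((i - r₁ - r₂) / 2)) (t ^ 2) n *
              qpoch ((t ^ 2) ^ ((i - r₃ - r₄) / 2)) (t ^ 2) n *
              qpoch ((t ^ 2) ^ ((j - r₁ - r₄) / 2)) (t ^ 2) n *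
              qpoch ((t ^ 2) ^ ((j - r₂ - r₃) / 2)) (t ^ 2) n) /
            (qpoch (t ^ 2) (t ^ 2) n *
              qpoch ((t ^ 2) ^ (c + N - 1)) (t ^ 2) n *
              qpoch ((t ^ 2) ^ (-(rho r₁ r₂ r₃ r₄) - (N - 1))) (t ^ 2) n *
              qpoch ((t ^ 2) ^ ((i + j - r₂ - r₄) / 2 + 1)) (t ^ 2) n *
              qpoch ((t ^ 2) ^ ((i + j - r₁ - r₃) / 2 + 1)) (t ^ 2) n) := by
  obtain ⟨-, -, -, -, -, -, hN, h12, h34, h14, h23, -, hi, -, hj⟩ := hadm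
  rw [show (i - r₁ - r₂) / 2 = -((r₁ + r₂ - i) / 2) by omega,
    show (i - r₃ - r₄) / 2 = -((r₃ + r₄ - i) / 2) by omega,
    show (j - r₁ - r₄) / 2 = -((r₁ + r₄ - j) / 2) by omega,
    show (j - r₂ - r₃) / 2 = -((r₂ + r₃ - j) / 2) by omega]
  exact sum_sixjSummand_eq ht ht1 hc hN (by omega) (by omega) (by simp only [rho]; omega)
    (by simp only [mMax]; omega) (by simp only [mMax]; omega) (by simp only [mMax]; omega)
    (by simp only [mMax]; omega) (by simp only [mMax]; omega)
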